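/- Let C be the Cayley algebra with norm n over an algebraically closed field of characteristic not 2, and T_B the bi-Cayley Jordan triple system on B = C ⊕ C. A nonzero element x = (x₁,x₂) ∈ B has rank 1 (i.e., Q_x(B) = F·x) if and only if x₂x₁ = 0 and n(x₁) = n(x₂) = 0. -/

import Mathlib

/-- The standard involution of a composition algebra:
`x̄ = n(x,1)·1 - x`, where `n(·,·)` is the polar form of the norm `n`. -/
def ocConj (F : Type) [Field F] (C : Type) [NonAssocRing C] [Module F C]
    (n : QuadraticForm F C) (x : C) : C :=
  QuadraticMap.polar n x 1 • (1 : C) - x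

/-- The quadratic operator of the bi-Cayley Jordan pair / triple system on
`B = C ⊕ C`:
`Q_x(y) = (x₁ȳ₁x₁ + x̄₂(y₂x₁), x₂ȳ₂x₂ + (x₂y₁)x̄₁)`. -/
def biQ (F : Type) [Field F] (C : Type) [NonAssocRing C] [Module F C]
    (n : QuadraticForm F C) (x y : C × C) : C × C :=
  ((x.1 * ocConj F C n y.1) * x.1 + ocConj F C n x.2 * (y.2 * x.1),
   (x.2 * ocConj F C n y.2) * x.2 + (x.2 * y.1) * ocConj F C n x.1)


/-!
Linearizing `n(xy) = n(x) n(y)` gives `n(xy, z) = n(y, x̄z)` and `n(yx, z) = n(y, zx̄)`, and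
pairing with an arbitrary vector (`n` is nondegenerate) turns these into the Cayley identities
`(x ȳ) x = n(x,y) x - n(x) y`, `x̄ (y z) + ȳ (x z) = n(x,y) z` and `(z y) x̄ + (z x) ȳ = n(x,y) z`,
which need no associativity. They give
`Q_x(y) = t(x,y) x - (n(x₁) y₁ + ȳ₂ (x₂x₁), n(x₂) y₂ + (x₂x₁) ȳ₁)`.
If `x₂x₁ = 0` and `n(x₁) = n(x₂) = 0`, this is `t(x,y) x`, and `t` is nondegenerate, so the image
is `F·x`. Conversely, if the image is `F·x`, then taking `y = (u, 0)` shows that `n(x₁) u` is a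
multiple of `x₁` for every `u`, which forces `n(x₁) = 0` as `dim C > 1`; likewise `n(x₂) = 0`, and
then `y = (1, 0)` gives `(0, x₂x₁) ∈ F·x`, hence `x₂x₁ = 0`.
-/

open QuadraticMap

section CompositionAlgebra

variable {F : Type} [Field F] {C : Type} [NonAssocRing C] [Module F C] (n : QuadraticForm F C)

lemma ocConj_zero : ocConj F C n 0 = 0 := by
  simp [ocConj]

lemma ocConj_mul [IsScalarTower F C C] (x z : C) :
    ocConj F C n x * z = polar n x 1 • z - x * z := by
  rw [ocConj, sub_mul, smul_mul_assoc, one_mul]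

lemma mul_ocConj [SMulCommClass F C C] (x z : C) :
    z * ocConj F C n x = polar n x 1 • z - z * x := by
  rw [ocConj, mul_sub, mul_smul_comm, mul_one]

lemma eq_of_forall_polar_eq (hnd : ∀ x : C, (∀ y : C, polar n x y = 0) → x = 0) {a b : C}
    (h : ∀ w, polar n a w = polar n b w) : a = b :=
  sub_eq_zero.mp <| hnd _ fun w => by rw [polar_sub_left, h, sub_self]

variable (hcomp : ∀ x y : C, n (x * y) = n x * n y)
include hcomp

lemma polar_mul_mul_left (x y z : C) : polar n (x * y) (x * z) = n x * polar n y z := by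
  simp only [polar, ← mul_add, hcomp]
  ring

lemma polar_mul_mul_right (x y z : C) : polar n (y * x) (z * x) = polar n y z * n x := by
  simp only [polar, ← add_mul, hcomp]
  ring

lemma polar_mul_add_polar_mul_left (x w y z : C) :
    polar n (x * y) (w * z) + polar n (w * y) (x * z) = polar n x w * polar n y z := by
  have h := polar_mul_mul_left n hcomp (x + w) y z
  rw [add_mul, add_mul, polar_add_left, polar_add_right, polar_add_right,
    polar_mul_mul_left n hcomp, polar_mul_mul_left n hcomp,
    show n (x + w) = polar n x w + n x + n w by rw [polar]; ring] at h
  linear_combination h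

lemma polar_mul_add_polar_mul_right (x w y z : C) :
    polar n (y * x) (z * w) + polar n (y * w) (z * x) = polar n y z * polar n x w := by
  have h := polar_mul_mul_right n hcomp (x + w) y z
  rw [mul_add, mul_add, polar_add_left, polar_add_right, polar_add_right,
    polar_mul_mul_right n hcomp, polar_mul_mul_right n hcomp,
    show n (x + w) = polar n x w + n x + n w by rw [polar]; ring] at h
  linear_combination h

lemma polar_mul_left_eq [IsScalarTower F C C] (x y z : C) :
    polar n (x * y) z = polar n y (ocConj F C n x * z) := by
  have h := polar_mul_add_polar_mul_left n hcomp x 1 y z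
  rw [one_mul, one_mul] at h
  rw [ocConj_mul, polar_sub_right, polar_smul_right, smul_eq_mul]
  linear_combination h

lemma polar_mul_right_eq [SMulCommClass F C C] (x y z : C) :
    polar n (y * x) z = polar n y (z * ocConj F C n x) := by
  have h := polar_mul_add_polar_mul_right n hcomp x 1 y z
  rw [mul_one, mul_one] at h
  rw [mul_ocConj, polar_sub_right, polar_smul_right, smul_eq_mul]
  linear_combination h

variable (hnd : ∀ x : C, (∀ y : C, polar n x y = 0) → x = 0)
include hnd

lemma map_one_of_nontrivial [Nontrivial C] : n 1 = 1 := by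
  have h := hcomp 1 1
  rw [one_mul] at h
  have hne : n 1 ≠ 0 := by
    intro h0
    have hzero : ∀ x : C, n x = 0 := fun x => by rw [← mul_one x, hcomp, h0, mul_zero]
    exact one_ne_zero (hnd 1 fun y => by simp [polar, hzero])
  exact mul_left_cancel₀ hne (h.symm.trans (mul_one _).symm)

variable [Nontrivial C]

lemma polar_one_one : polar n (1 : C) 1 = 2 := by
  rw [polar_self, map_one_of_nontrivial n hcomp hnd, two_nsmul, one_add_one_eq_two]

lemma polar_ocConj_one (x : C) : polar n (ocConj F C n x) 1 = polar n x 1 := by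
  rw [ocConj, polar_sub_left, polar_smul_left, polar_one_one n hcomp hnd, smul_eq_mul]
  ring

lemma ocConj_ocConj (x : C) : ocConj F C n (ocConj F C n x) = x := by
  rw [ocConj, polar_ocConj_one n hcomp hnd, ocConj, sub_sub_cancel]

lemma ocConj_one : ocConj F C n 1 = 1 := by
  rw [ocConj, polar_one_one n hcomp hnd, two_smul, add_sub_cancel_right]

lemma polar_ocConj_ocConj (x y : C) :
    polar n (ocConj F C n x) (ocConj F C n y) = polar n x y := by
  simp only [ocConj, polar_sub_left, polar_sub_right, polar_smul_left, polar_smul_right,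
    smul_eq_mul, polar_one_one n hcomp hnd, polar_comm n (1 : C) y]
  ring

lemma ocConj_mul_mul_add [IsScalarTower F C C] (x y z : C) :
    ocConj F C n x * (y * z) + ocConj F C n y * (x * z) = polar n x y • z := by
  refine eq_of_forall_polar_eq n hnd fun w => ?_
  rw [polar_add_left, polar_smul_left, polar_mul_left_eq n hcomp (ocConj F C n x),
    polar_mul_left_eq n hcomp (ocConj F C n y), ocConj_ocConj n hcomp hnd,
    ocConj_ocConj n hcomp hnd, smul_eq_mul, polar_comm n (y * z), polar_comm n (x * z),
    polar_comm n z, polar_mul_add_polar_mul_left n hcomp, mul_comm]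

variable [SMulCommClass F C C]

lemma mul_mul_ocConj (x z : C) : z * x * ocConj F C n x = n x • z := by
  refine eq_of_forall_polar_eq n hnd fun w => ?_
  rw [polar_smul_left, polar_mul_right_eq n hcomp, ocConj_ocConj n hcomp hnd,
    polar_mul_mul_right n hcomp, smul_eq_mul, mul_comm]

lemma mul_mul_ocConj_add (x y z : C) :
    z * y * ocConj F C n x + z * x * ocConj F C n y = polar n x y • z := by
  refine eq_of_forall_polar_eq n hnd fun w => ?_
  rw [polar_add_left, polar_smul_left, polar_mul_right_eq n hcomp (ocConj F C n x),
    polar_mul_right_eq n hcomp (ocConj F C n y), ocConj_ocConj n hcomp hnd,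
    ocConj_ocConj n hcomp hnd, smul_eq_mul, polar_comm n x,
    polar_mul_add_polar_mul_right n hcomp, mul_comm]

lemma mul_ocConj_self (x : C) : x * ocConj F C n x = n x • (1 : C) := by
  simpa only [one_mul] using mul_mul_ocConj n hcomp hnd x 1

variable [IsScalarTower F C C]

lemma mul_ocConj_mul (x y : C) : x * ocConj F C n y * x = polar n x y • x - n x • y := by
  have h := mul_mul_ocConj_add n hcomp hnd (ocConj F C n x) (ocConj F C n y) x
  rw [ocConj_ocConj n hcomp hnd, ocConj_ocConj n hcomp hnd, polar_ocConj_ocConj n hcomp hnd,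
    mul_ocConj_self n hcomp hnd, smul_mul_assoc, one_mul] at h
  rw [← h, add_sub_cancel_right]

lemma biQ_eq (x y : C × C) :
    biQ F C n x y = polar (n.prod n) x y • x
      - (n x.1 • y.1 + ocConj F C n y.2 * (x.2 * x.1),
         n x.2 • y.2 + x.2 * x.1 * ocConj F C n y.1) := by
  have h₁ := ocConj_mul_mul_add n hcomp hnd x.2 y.2 x.1
  have h₂ := mul_mul_ocConj_add n hcomp hnd x.1 y.1 x.2
  rw [← eq_sub_iff_add_eq'] at h₁
  rw [← eq_sub_iff_add_eq] at h₂
  ext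
  · simp only [biQ, mul_ocConj_mul n hcomp hnd, h₁, polar_prod, Prod.fst_sub, Prod.smul_fst]
    module
  · simp only [biQ, mul_ocConj_mul n hcomp hnd, h₂, polar_prod, Prod.snd_sub, Prod.smul_snd]
    module

end CompositionAlgebra

section Nondegenerate

variable {K M M' : Type} [Field K] [AddCommGroup M] [Module K M] [AddCommGroup M'] [Module K M']

lemma eq_zero_of_forall_exists_smul_eq (hdim : 1 < Module.finrank K M) {a : K} {v : M}
    (h : ∀ u : M, ∃ d : K, a • u = d • v) : a = 0 := by
  by_contra ha
  have hspan : ∀ u : M, ∃ c : K, c • v = u := fun u => by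
    obtain ⟨d, hd⟩ := h u
    exact ⟨a⁻¹ * d, by rw [mul_smul, ← hd, inv_smul_smul₀ ha]⟩
  have := finrank_le_one v hspan
  omega

lemma exists_polar_eq_one {Q : QuadraticForm K M}
    (hnd : ∀ x : M, (∀ y : M, polar Q x y = 0) → x = 0) {x : M} (hx : x ≠ 0) :
    ∃ y, polar Q x y = 1 := by
  obtain ⟨y, hy⟩ : ∃ y, polar Q x y ≠ 0 := by
    by_contra! h
    exact hx (hnd x h)
  exact ⟨(polar Q x y)⁻¹ • y, by rw [polar_smul_right, smul_eq_mul, inv_mul_cancel₀ hy]⟩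

lemma eq_zero_of_forall_polar_prod_eq_zero {Q : QuadraticForm K M} {Q' : QuadraticForm K M'}
    (hnd : ∀ x : M, (∀ y : M, polar Q x y = 0) → x = 0)
    (hnd' : ∀ x : M', (∀ y : M', polar Q' x y = 0) → x = 0) (x : M × M')
    (h : ∀ y, polar (Q.prod Q') x y = 0) : x = 0 := by
  refine Prod.ext (hnd _ fun y => ?_) (hnd' _ fun y => ?_)
  · simpa using h (y, 0)
  · simpa using h (0, y)

end Nondegenerate

section BiCayley

variable {F : Type} [Field F] {C : Type} [NonAssocRing C] [Module F C]
  [SMulCommClass F C C] [IsScalarTower F C C] {n : QuadraticForm F C}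
  (hcomp : ∀ x y : C, n (x * y) = n x * n y)
  (hnd : ∀ x : C, (∀ y : C, polar n x y = 0) → x = 0) [Nontrivial C]
include hcomp hnd

lemma biQ_eq_polar_smul {x : C × C} (hx : x.2 * x.1 = 0) (hx₁ : n x.1 = 0) (hx₂ : n x.2 = 0)
    (y : C × C) : biQ F C n x y = polar (n.prod n) x y • x := by
  rw [biQ_eq n hcomp hnd, hx, hx₁, hx₂]
  simp

lemma biQ_image_eq_line {x : C × C} (hx : x.2 * x.1 = 0) (hx₁ : n x.1 = 0) (hx₂ : n x.2 = 0) :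
    {z : C × C | ∃ y : C × C, biQ F C n x y = z} = {z : C × C | ∃ c : F, z = c • x} := by
  rcases eq_or_ne x 0 with rfl | hx₀
  · ext z
    simp [biQ, ocConj_zero, eq_comm, Prod.mk_zero_zero]
  obtain ⟨y, hy⟩ := exists_polar_eq_one (eq_zero_of_forall_polar_prod_eq_zero hnd hnd) hx₀
  ext z
  constructor
  · rintro ⟨y', rfl⟩
    exact ⟨_, biQ_eq_polar_smul hcomp hnd hx hx₁ hx₂ y'⟩
  · rintro ⟨c, rfl⟩
    refine ⟨c • y, ?_⟩
    rw [biQ_eq_polar_smul hcomp hnd hx hx₁ hx₂, polar_smul_right, hy, smul_eq_mul, mul_one]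

lemma snd_mul_fst_and_norms_eq_zero_of_biQ_eq_smul (hdim : 1 < Module.finrank F C) {x : C × C}
    (h : ∀ y, ∃ c : F, biQ F C n x y = c • x) : x.2 * x.1 = 0 ∧ n x.1 = 0 ∧ n x.2 = 0 := by
  have hR : ∀ y : C × C, ∃ d : F, (n x.1 • y.1 + ocConj F C n y.2 * (x.2 * x.1),
      n x.2 • y.2 + x.2 * x.1 * ocConj F C n y.1) = d • x := fun y => by
    obtain ⟨c, hc⟩ := h y
    exact ⟨polar (n.prod n) x y - c, by rw [sub_smul, ← hc, biQ_eq n hcomp hnd, sub_sub_cancel]⟩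
  have hx₁ : n x.1 = 0 := eq_zero_of_forall_exists_smul_eq hdim fun u => by
    obtain ⟨d, hd⟩ := hR (u, 0)
    exact ⟨d, by simpa [ocConj_zero] using congrArg Prod.fst hd⟩
  have hx₂ : n x.2 = 0 := eq_zero_of_forall_exists_smul_eq hdim fun u => by
    obtain ⟨d, hd⟩ := hR (0, u)
    exact ⟨d, by simpa [ocConj_zero] using congrArg Prod.snd hd⟩
  obtain ⟨d, hd⟩ := hR (1, 0)
  simp only [hx₁, hx₂, ocConj_zero, ocConj_one n hcomp hnd, zero_smul, zero_add, zero_mul,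
    mul_one, Prod.ext_iff, Prod.smul_fst, Prod.smul_snd] at hd
  refine ⟨?_, hx₁, hx₂⟩
  rcases smul_eq_zero.mp hd.1.symm with rfl | h₁
  · rw [hd.2, zero_smul]
  · rw [h₁, mul_zero]

end BiCayley

theorem stmt_16_general (F : Type) [Field F]
    (C : Type) [NonAssocRing C] [Module F C] [SMulCommClass F C C] [IsScalarTower F C C]
    (n : QuadraticForm F C)
    (hcomp : ∀ x y : C, n (x * y) = n x * n y)
    (hnd : ∀ x : C, (∀ y : C, QuadraticMap.polar n x y = 0) → x = 0)
    (hdim : Module.finrank F C = 8)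
    (x : C × C) :
    ({z : C × C | ∃ y : C × C, biQ F C n x y = z}
        = {z : C × C | ∃ c : F, z = c • x})
      ↔ (x.2 * x.1 = 0 ∧ n x.1 = 0 ∧ n x.2 = 0) := by
  have : Nontrivial C := Module.nontrivial_of_finrank_eq_succ hdim
  refine ⟨fun h => ?_, fun ⟨hx, hx₁, hx₂⟩ => biQ_image_eq_line hcomp hnd hx hx₁ hx₂⟩
  refine snd_mul_fst_and_norms_eq_zero_of_biQ_eq_smul hcomp hnd (by omega) fun y => ?_
  exact (h ▸ ⟨y, rfl⟩ : biQ F C n x y ∈ {z : C × C | ∃ c : F, z = c • x})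

/-- In the bi-Cayley Jordan triple system on `B = C ⊕ C` over an algebraically
closed field of characteristic not 2, a nonzero element `x = (x₁,x₂)` has
rank 1 (i.e. `Q_x(B) = F·x`) if and only if `x₂x₁ = 0` and
`n(x₁) = n(x₂) = 0`. -/
theorem stmt_16 (F : Type) [Field F] [IsAlgClosed F] (hchar : (2 : F) ≠ 0)
    (C : Type) [NonAssocRing C] [Module F C] [SMulCommClass F C C] [IsScalarTower F C C]
    (n : QuadraticForm F C)
    (hcomp : ∀ x y : C, n (x * y) = n x * n y)
    (hnd : ∀ x : C, (∀ y : C, QuadraticMap.polar n x y = 0) → x = 0)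
    (hdim : Module.finrank F C = 8)
    (x : C × C) (hx : x ≠ 0) :
    ({z : C × C | ∃ y : C × C, biQ F C n x y = z}
        = {z : C × C | ∃ c : F, z = c • x})
      ↔ (x.2 * x.1 = 0 ∧ n x.1 = 0 ∧ n x.2 = 0) :=
  stmt_16_general F C n hcomp hnd hdim x
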